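/- arXiv:1505.07945 — 3 statements merged into one kernel-verified Lean document; each statement's English description precedes it below -/
import Mathlib

section
/- Every path condition can be reduced to a simple path condition: for every path condition π over a set R of relationship labels there exists a simple path condition π' such that π ≡ π', i.e. for every system graph G = (V,E) and all u, v ∈ V, G,u,v ⊨ π iff G,u,v ⊨ π'. -/
/-- Path conditions over a set `R` of relationship labels. -/
inductive PathCond (R : Type) : Type where
  | diamond : PathCond R
  | rel : R → PathCond R
  | comp : PathCond R → PathCond R → PathCond R
  | plus : PathCond R → PathCond R
  | rev : PathCond R → PathCond R

/-- The least relation `S` containing `r` and closed under: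
if `r u w` and `(w,v) ∈ S` then `(u,v) ∈ S`. -/
inductive PlusClosure {V : Type} (r : V → V → Prop) : V → V → Prop where
  | base {u v : V} : r u v → PlusClosure r u v
  | head {u w v : V} : r u w → PlusClosure r w v → PlusClosure r u v

/-- Satisfaction of a path condition in a system graph `G = (V, E)`,
where `E ⊆ V × V × R`. -/
def Sat {R V : Type} (E : Set (V × V × R)) : PathCond R → V → V → Prop
  | .diamond => fun u v => u = v
  | .rel r => fun u v => (u, v, r) ∈ E
  | .comp π π' => fun u v => ∃ w, Sat E π u w ∧ Sat E π' w v
  | .plus π => PlusClosure (Sat E π)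
  | .rev π => fun u v => Sat E π v u

/-- Equivalence of path conditions: same satisfaction in every system graph. -/
def PCEquiv {R : Type} (π π' : PathCond R) : Prop :=
  ∀ (V : Type) (E : Set (V × V × R)) (u v : V), Sat E π u v ↔ Sat E π' u v

/-- Simple path conditions: `⋄`, `r` and `r̄` (for `r ∈ R`) are simple, and if
`π ≠ ⋄` and `π' ≠ ⋄` are simple then so are `π ∘ π'` and `π⁺`.  (In particular,
reversal is applied only directly to elements of `R`.) -/
inductive SimplePC {R : Type} : PathCond R → Prop where
  | diamond : SimplePC PathCond.diamond
  | rel (r : R) : SimplePC (PathCond.rel r)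
  | revRel (r : R) : SimplePC (PathCond.rev (PathCond.rel r))
  | comp {π π' : PathCond R} : SimplePC π → SimplePC π' →
      π ≠ PathCond.diamond → π' ≠ PathCond.diamond → SimplePC (PathCond.comp π π')
  | plus {π : PathCond R} : SimplePC π → π ≠ PathCond.diamond →
      SimplePC (PathCond.plus π)


/-!
Reversal is pushed down to the labels by `(π ∘ π')‾ ≡ π̄' ∘ π̄`, `(π⁺)‾ ≡ (π̄)⁺`, `π̄̄ ≡ π` and
`⋄̄ ≡ ⋄`, while `⋄` is removed from operands by `⋄ ∘ π ≡ π ≡ π ∘ ⋄` and `⋄⁺ ≡ ⋄`. Since `PlusClosure`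
is `Relation.TransGen`, every rule is an identity between relations in Mathlib's relation calculus.
-/

theorem plusClosure_eq_transGen {V : Type} (r : V → V → Prop) :
    PlusClosure r = Relation.TransGen r := by
  funext u v
  apply propext
  constructor
  · intro h
    induction h with
    | base h => exact .single h
    | head h _ ih => exact .head h ih
  · intro h
    induction h using Relation.TransGen.head_induction_on with
    | single h => exact .base h
    | head h _ ih => exact .head h ih

namespace PathCond

variable {R V : Type} (E : Set (V × V × R))

def mkComp : PathCond R → PathCond R → PathCond R
  | diamond, σ' => σ'
  | σ, diamond => σ
  | σ, σ' => comp σ σ'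

def mkPlus : PathCond R → PathCond R
  | diamond => diamond
  | σ => plus σ

def simplify : Bool → PathCond R → PathCond R
  | _, diamond => diamond
  | false, rel r => rel r
  | true, rel r => rev (rel r)
  | false, comp π π' => mkComp (simplify false π) (simplify false π')
  | true, comp π π' => mkComp (simplify true π') (simplify true π)
  | b, plus π => mkPlus (simplify b π)
  | b, rev π => simplify (!b) π

theorem simplePC_mkComp {σ σ' : PathCond R} (hσ : SimplePC σ) (hσ' : SimplePC σ') :
    SimplePC (mkComp σ σ') := by
  unfold mkComp
  split
  · exact hσ'
  · exact hσ
  · exact .comp hσ hσ' ‹_› ‹_›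

theorem simplePC_mkPlus {σ : PathCond R} (hσ : SimplePC σ) : SimplePC (mkPlus σ) := by
  unfold mkPlus
  split
  · exact .diamond
  · exact .plus hσ ‹_›

theorem simplePC_simplify (b : Bool) (π : PathCond R) : SimplePC (simplify b π) := by
  induction π generalizing b with
  | diamond => exact .diamond
  | rel r =>
    cases b
    · exact .rel r
    · exact .revRel r
  | comp π π' ih ih' =>
    cases b
    · exact simplePC_mkComp (ih false) (ih' false)
    · exact simplePC_mkComp (ih' true) (ih true)
  | plus π ih => exact simplePC_mkPlus (ih b)
  | rev π ih => exact ih !b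

theorem sat_mkComp (σ σ' : PathCond R) :
    Sat E (mkComp σ σ') = Relation.Comp (Sat E σ) (Sat E σ') := by
  unfold mkComp
  split
  · exact Relation.eq_comp.symm
  · exact Relation.comp_eq.symm
  · rfl

theorem sat_mkPlus (σ : PathCond R) : Sat E (mkPlus σ) = Relation.TransGen (Sat E σ) := by
  unfold mkPlus
  split
  · exact (Relation.transGen_eq_self (r := @Eq V)).symm
  · exact plusClosure_eq_transGen _

theorem sat_simplify (b : Bool) (π : PathCond R) :
    Sat E (simplify b π) = bif b then flip (Sat E π) else Sat E π := by
  induction π generalizing b with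
  | diamond =>
    cases b
    · rfl
    · funext u v; exact propext eq_comm
  | rel r => cases b <;> rfl
  | comp π π' ih ih' =>
    cases b
    · rw [simplify, sat_mkComp, ih, ih']; rfl
    · rw [simplify, sat_mkComp, ih, ih']; exact Relation.flip_comp.symm
  | plus π ih =>
    rw [simplify, sat_mkPlus, ih, Sat, plusClosure_eq_transGen]
    cases b
    · rfl
    · funext u v; exact propext Relation.transGen_swap
  | rev π ih => rw [simplify, ih]; cases b <;> rfl

end PathCond

/-- every path condition is equivalent to a simple path condition. -/
theorem exists_simple_equiv {R : Type} (π : PathCond R) :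
    ∃ π' : PathCond R, SimplePC π' ∧ PCEquiv π π' :=
  ⟨π.simplify false, PathCond.simplePC_simplify false π, fun V E u v => by
    rw [PathCond.sat_simplify]; rfl⟩
end

section
/- For every simple path condition π over R in which ⋄ does not occur, the recursively constructed ε-free NFA M_π accepts exactly the word language of π: L(M_π) = L(π). -/
/-- ⋄-free simple path conditions over an alphabet `A` of atoms: built from
atoms using concatenation `∘` and repetition `⁺`.  (For path conditions over a
label set `R`, take `A = R ⊕ R`, i.e. `Σ = R ∪ {r̄ : r ∈ R}`.) -/
inductive SPC (A : Type) : Type where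
  | atom : A → SPC A
  | comp : SPC A → SPC A → SPC A
  | plus : SPC A → SPC A

/-- An NFA with a single start state `s` and a single accepting state `f`;
states are natural numbers, `Q` is the state set and `δ ⊆ Q × Q × A` the
transition relation. -/
structure SNFA (A : Type) : Type where
  Q : Set ℕ
  δ : Set (ℕ × ℕ × A)
  s : ℕ
  f : ℕ

/-- Rename the states of an NFA by adding `n` (used to obtain disjoint copies). -/
def SNFA.shift {A : Type} (n : ℕ) (M : SNFA A) : SNFA A :=
  ⟨(fun q => q + n) '' M.Q,
   (fun t => (t.1 + n, t.2.1 + n, t.2.2)) '' M.δ,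
   M.s + n, M.f + n⟩

/-- `AcceptsFrom δ q w q'`: the word `w` can take the automaton from state `q`
to state `q'` along transitions in `δ`. -/
def AcceptsFrom {A : Type} (δ : Set (ℕ × ℕ × A)) : ℕ → List A → ℕ → Prop
  | q, [], q' => q = q'
  | q, σ :: w, q' => ∃ p, (q, p, σ) ∈ δ ∧ AcceptsFrom δ p w q'

/-- The language accepted by an `SNFA`. -/
def SNFA.lang {A : Type} (M : SNFA A) : Set (List A) :=
  {w | AcceptsFrom M.δ M.s w M.f}

/-- The word language `L(π)` of a ⋄-free simple path condition:
`L(σ) = {σ}`, `L(π ∘ φ) = L(π)L(φ)`, `L(π⁺) = ⋃_{n ≥ 1} L(π)ⁿ`. -/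
def SPC.lang {A : Type} : SPC A → Set (List A)
  | .atom σ => {[σ]}
  | .comp π φ => {w | ∃ x ∈ SPC.lang π, ∃ y ∈ SPC.lang φ, w = x ++ y}
  | .plus π => {w | ∃ l : List (List A), l ≠ [] ∧ (∀ x ∈ l, x ∈ SPC.lang π) ∧ w = l.flatten}

/-- The recursive ε-free NFA construction `M_π` (paired with an upper bound on
the states used, to obtain disjoint state sets for concatenation):
* for an atom `σ`, states `{s, f}` with the single transition `(s, f, σ)`;
* for `π ∘ φ` (with the states of `M_φ` shifted to be disjoint from those of
  `M_π`): states `Q_π ∪ (Q_φ \ {s_φ})`, start `s_π`, accepting state `f_φ`,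
  transitions `δ_π`, together with every transition of `δ_φ` whose source is
  not `s_φ`, together with `(f_π, q, σ)` for every `(s_φ, q, σ) ∈ δ_φ`;
* for `π⁺`: the automaton `M_π` together with a transition `(f_π, q, σ)` for
  every initial transition `(s_π, q, σ) ∈ δ_π` (there is a unique such
  transition, of the form `(s, q, σ)` where `π = σ ∘ π'`). -/
def buildF {A : Type} : SPC A → SNFA A × ℕ
  | .atom σ => (⟨{0, 1}, {(0, 1, σ)}, 0, 1⟩, 2)
  | .comp π φ =>
      let P := buildF π
      let Q := buildF φ
      let M₂ := Q.1.shift P.2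
      (⟨P.1.Q ∪ (M₂.Q \ {M₂.s}),
        P.1.δ ∪ {t ∈ M₂.δ | t.1 ≠ M₂.s} ∪
          (fun t => (P.1.f, t.2.1, t.2.2)) '' {t ∈ M₂.δ | t.1 = M₂.s},
        P.1.s, M₂.f⟩, P.2 + Q.2)
  | .plus π =>
      let P := buildF π
      (⟨P.1.Q,
        P.1.δ ∪ (fun t => (P.1.f, t.2.1, t.2.2)) '' {t ∈ P.1.δ | t.1 = P.1.s},
        P.1.s, P.1.f⟩, P.2)

/-!
An induction on `π` carrying two invariants of `M_π`: its start and accepting states differ and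
no transition re-enters the start state, and all its states lie below the bound returned by
`buildF`, so that shifting the second factor of a concatenation by that bound makes the state
sets disjoint. Under these invariants a run of `M_π ∘ M_φ` is a run of `M_π` to `f_π`, followed by
a run of `M_φ` whose first transition has been moved from `s_φ` to `f_π`; and a run of `M_π⁺`
splits at the back edges out of `f_π`, each of which stands for an initial transition of `M_π`.
-/

variable {A : Type}

namespace AcceptsFrom

variable {δ δ' : Set (ℕ × ℕ × A)}

theorem mono (h : δ ⊆ δ') :
    ∀ {w : List A} {p q : ℕ}, AcceptsFrom δ p w q → AcceptsFrom δ' p w q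
  | [], _, _, hw => hw
  | _ :: _, _, _, ⟨r, hr, hw⟩ => ⟨r, h hr, mono h hw⟩

theorem append :
    ∀ {x y : List A} {p q r : ℕ}, AcceptsFrom δ p x q → AcceptsFrom δ q y r →
      AcceptsFrom δ p (x ++ y) r
  | [], _, _, _, _, rfl, hy => hy
  | _ :: _, _, _, _, _, ⟨t, ht, hx⟩, hy => ⟨t, ht, append hx hy⟩

theorem shift_iff {n : ℕ} :
    ∀ {w : List A} {p q : ℕ},
      AcceptsFrom ((fun t => (t.1 + n, t.2.1 + n, t.2.2)) '' δ) (p + n) w (q + n) ↔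
        AcceptsFrom δ p w q
  | [], _, _ => Nat.add_right_cancel_iff
  | σ :: w, p, q => by
    constructor
    · rintro ⟨_, ⟨⟨a, b, τ⟩, hab, heq⟩, hw⟩
      simp only [Prod.mk.injEq, Nat.add_right_cancel_iff] at heq
      obtain ⟨rfl, rfl, rfl⟩ := heq
      exact ⟨b, hab, shift_iff.mp hw⟩
    · rintro ⟨r, hr, hw⟩
      exact ⟨r + n, ⟨(p, r, σ), hr, rfl⟩, shift_iff.mpr hw⟩

end AcceptsFrom

namespace SNFA

def concat (M N : SNFA A) : SNFA A :=
  ⟨M.Q ∪ (N.Q \ {N.s}),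
   M.δ ∪ {t ∈ N.δ | t.1 ≠ N.s} ∪ (fun t => (M.f, t.2.1, t.2.2)) '' {t ∈ N.δ | t.1 = N.s},
   M.s, N.f⟩

def plus (M : SNFA A) : SNFA A :=
  ⟨M.Q, M.δ ∪ (fun t => (M.f, t.2.1, t.2.2)) '' {t ∈ M.δ | t.1 = M.s}, M.s, M.f⟩

/-- The field `Q` is not constrained: it plays no role in the accepted language. -/
def StatesIn (M : SNFA A) (S : Set ℕ) : Prop :=
  M.s ∈ S ∧ M.f ∈ S ∧ ∀ t ∈ M.δ, t.1 ∈ S ∧ t.2.1 ∈ S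

def IsProper (M : SNFA A) : Prop :=
  M.s ≠ M.f ∧ ∀ t ∈ M.δ, t.2.1 ≠ M.s

variable {M N : SNFA A} {S T : Set ℕ}

theorem lang_single {Q : Set ℕ} {s f : ℕ} (h : s ≠ f) (σ : A) :
    (⟨Q, {(s, f, σ)}, s, f⟩ : SNFA A).lang = {[σ]} := by
  ext w
  constructor
  · obtain _ | ⟨τ, _ | ⟨υ, w⟩⟩ := w
    · exact fun hw => absurd hw h
    · rintro ⟨r, hr, rfl⟩
      simp only [Set.mem_singleton_iff, Prod.mk.injEq] at hr
      rw [hr.2.2]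
      rfl
    · rintro ⟨r, hr, r', hr', -⟩
      simp only [Set.mem_singleton_iff, Prod.mk.injEq] at hr hr'
      exact absurd (hr.2.1.symm.trans hr'.1) h.symm
  · rintro rfl
    exact ⟨f, rfl, rfl⟩

theorem StatesIn.mono (h : M.StatesIn S) (hST : S ⊆ T) : M.StatesIn T :=
  ⟨hST h.1, hST h.2.1, fun t ht => ⟨hST (h.2.2 t ht).1, hST (h.2.2 t ht).2⟩⟩

theorem lang_shift (n : ℕ) : (M.shift n).lang = M.lang :=
  Set.ext fun _ => AcceptsFrom.shift_iff

theorem statesIn_shift (n : ℕ) : (M.shift n).StatesIn (Set.Ici n) := by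
  refine ⟨Nat.le_add_left _ _, Nat.le_add_left _ _, ?_⟩
  rintro _ ⟨t, -, rfl⟩
  exact ⟨Nat.le_add_left _ _, Nat.le_add_left _ _⟩

theorem StatesIn.shift {m : ℕ} (h : M.StatesIn (Set.Iio m)) (n : ℕ) :
    (M.shift n).StatesIn (Set.Iio (n + m)) := by
  obtain ⟨hs, hf, hδ⟩ := h
  simp only [Set.mem_Iio] at hs hf
  refine ⟨show M.s + n < n + m by omega, show M.f + n < n + m by omega, ?_⟩
  rintro _ ⟨t, ht, rfl⟩
  have := hδ t ht
  simp only [Set.mem_Iio] at this ⊢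
  omega

theorem IsProper.shift (h : M.IsProper) (n : ℕ) : (M.shift n).IsProper := by
  refine ⟨fun hsf => h.1 (Nat.add_right_cancel hsf), ?_⟩
  rintro _ ⟨t, ht, rfl⟩ hts
  exact h.2 t ht (Nat.add_right_cancel hts)

theorem StatesIn.concat (hM : M.StatesIn S) (hN : N.StatesIn S) : (M.concat N).StatesIn S := by
  refine ⟨hM.1, hN.2.1, ?_⟩
  rintro t ((ht | ⟨ht, -⟩) | ⟨u, ⟨hu, -⟩, rfl⟩)
  exacts [hM.2.2 t ht, hN.2.2 t ht, ⟨hM.2.1, (hN.2.2 u hu).2⟩]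

theorem IsProper.concat (h : M.IsProper) (hM : M.StatesIn S) (hN : N.StatesIn T)
    (hST : Disjoint S T) : (M.concat N).IsProper := by
  refine ⟨hST.ne_of_mem hM.1 hN.2.1, ?_⟩
  rintro t ((ht | ⟨ht, -⟩) | ⟨u, ⟨hu, -⟩, rfl⟩)
  exacts [h.2 t ht, (hST.ne_of_mem hM.1 (hN.2.2 t ht).2).symm,
    (hST.ne_of_mem hM.1 (hN.2.2 u hu).2).symm]

theorem acceptsFrom_concat_iff (hM : M.StatesIn S) (hN : N.StatesIn T) (hST : Disjoint S T)
    (hN' : N.IsProper) :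
    ∀ {w : List A} {r q : ℕ}, r ∈ T → r ≠ N.s →
      (AcceptsFrom (M.concat N).δ r w q ↔ AcceptsFrom N.δ r w q)
  | [], _, _, _, _ => Iff.rfl
  | σ :: w, r, q, hr, hrs => by
    constructor
    · rintro ⟨p, (hp | ⟨hp, -⟩) | ⟨t, -, ht⟩, hw⟩
      · exact absurd rfl (hST.ne_of_mem (hM.2.2 _ hp).1 hr)
      · exact ⟨p, hp, (acceptsFrom_concat_iff hM hN hST hN' (hN.2.2 _ hp).2 (hN'.2 _ hp)).mp hw⟩
      · exact absurd (congrArg Prod.fst ht) (hST.ne_of_mem hM.2.1 hr)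
    · rintro ⟨p, hp, hw⟩
      exact ⟨p, Or.inl (Or.inr ⟨hp, hrs⟩),
        (acceptsFrom_concat_iff hM hN hST hN' (hN.2.2 _ hp).2 (hN'.2 _ hp)).mpr hw⟩

theorem exists_append_of_acceptsFrom_concat (hM : M.StatesIn S) (hN : N.StatesIn T)
    (hST : Disjoint S T) (hN' : N.IsProper) :
    ∀ {w : List A} {p : ℕ}, p ∈ S → AcceptsFrom (M.concat N).δ p w N.f →
      ∃ x y, w = x ++ y ∧ AcceptsFrom M.δ p x M.f ∧ y ∈ N.lang
  | [], _, hp, hw => absurd hw (hST.ne_of_mem hp hN.2.1)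
  | σ :: w, p, hp, ⟨r, hr, hw⟩ => by
    rcases hr with (hr | ⟨hr, -⟩) | ⟨⟨a, b, τ⟩, ⟨hab, rfl⟩, htr⟩
    · obtain ⟨x, y, rfl, hx, hy⟩ :=
        exists_append_of_acceptsFrom_concat hM hN hST hN' (hM.2.2 _ hr).2 hw
      exact ⟨σ :: x, y, rfl, ⟨r, hr, hx⟩, hy⟩
    · exact absurd rfl (hST.ne_of_mem hp (hN.2.2 _ hr).1)
    · simp only [Prod.mk.injEq] at htr
      obtain ⟨rfl, rfl, rfl⟩ := htr
      exact ⟨[], τ :: w, rfl, rfl,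
        ⟨b, hab, (acceptsFrom_concat_iff hM hN hST hN' (hN.2.2 _ hab).2 (hN'.2 _ hab)).mp hw⟩⟩

theorem lang_concat (hM : M.StatesIn S) (hN : N.StatesIn T) (hST : Disjoint S T)
    (hN' : N.IsProper) :
    (M.concat N).lang = {w | ∃ x ∈ M.lang, ∃ y ∈ N.lang, w = x ++ y} := by
  ext w
  constructor
  · intro hw
    obtain ⟨x, y, rfl, hx, hy⟩ := exists_append_of_acceptsFrom_concat hM hN hST hN' hM.1 hw
    exact ⟨x, hx, y, hy, rfl⟩
  · rintro ⟨x, hx, _ | ⟨σ, y⟩, hy, rfl⟩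
    · exact absurd hy hN'.1
    obtain ⟨r, hr, hy⟩ := hy
    have hy' := (acceptsFrom_concat_iff hM hN hST hN' (hN.2.2 _ hr).2 (hN'.2 _ hr)).mpr hy
    exact (AcceptsFrom.mono (Set.subset_union_left.trans Set.subset_union_left) hx).append
      ⟨r, Or.inr ⟨_, ⟨hr, rfl⟩, rfl⟩, hy'⟩

theorem lang_concat_shift {n : ℕ} (hM : M.StatesIn (Set.Iio n)) (hN : N.IsProper) :
    (M.concat (N.shift n)).lang = {w | ∃ x ∈ M.lang, ∃ y ∈ N.lang, w = x ++ y} := by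
  rw [lang_concat hM (statesIn_shift n) (Set.Iio_disjoint_Ici le_rfl) (hN.shift n), lang_shift]

theorem StatesIn.plus (h : M.StatesIn S) : M.plus.StatesIn S := by
  refine ⟨h.1, h.2.1, ?_⟩
  rintro t (ht | ⟨u, ⟨hu, -⟩, rfl⟩)
  exacts [h.2.2 t ht, ⟨h.2.1, (h.2.2 u hu).2⟩]

theorem IsProper.plus (h : M.IsProper) : M.plus.IsProper := by
  refine ⟨h.1, ?_⟩
  rintro t (ht | ⟨u, ⟨hu, -⟩, rfl⟩)
  exacts [h.2 t ht, h.2 u hu]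

theorem exists_flatten_of_acceptsFrom_plus :
    ∀ {w : List A} {p : ℕ}, AcceptsFrom M.plus.δ p w M.f →
      ∃ x, ∃ l : List (List A), w = x ++ l.flatten ∧ AcceptsFrom M.δ p x M.f ∧ ∀ y ∈ l, y ∈ M.lang
  | [], _, hw => ⟨[], [], rfl, hw, by simp⟩
  | σ :: w, p, ⟨r, hr, hw⟩ => by
    obtain ⟨x, l, rfl, hx, hl⟩ := exists_flatten_of_acceptsFrom_plus hw
    rcases hr with hr | ⟨⟨a, b, τ⟩, ⟨hab, rfl⟩, htr⟩
    · exact ⟨σ :: x, l, rfl, ⟨r, hr, hx⟩, hl⟩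
    · simp only [Prod.mk.injEq] at htr
      obtain ⟨rfl, rfl, rfl⟩ := htr
      exact ⟨[], (τ :: x) :: l, rfl, rfl, List.forall_mem_cons.mpr ⟨⟨b, hab, hx⟩, hl⟩⟩

theorem acceptsFrom_plus_final_of_mem_lang (h : M.s ≠ M.f) {y : List A} (hy : y ∈ M.lang) :
    AcceptsFrom M.plus.δ M.f y M.f := by
  obtain _ | ⟨σ, y⟩ := y
  · exact absurd hy h
  obtain ⟨r, hr, hy⟩ := hy
  exact ⟨r, Or.inr ⟨_, ⟨hr, rfl⟩, rfl⟩, AcceptsFrom.mono Set.subset_union_left hy⟩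

theorem acceptsFrom_plus_flatten (h : M.s ≠ M.f) :
    ∀ {l : List (List A)}, (∀ y ∈ l, y ∈ M.lang) → AcceptsFrom M.plus.δ M.f l.flatten M.f
  | [], _ => rfl
  | _ :: _, hl =>
    (acceptsFrom_plus_final_of_mem_lang h (List.forall_mem_cons.mp hl).1).append
      (acceptsFrom_plus_flatten h (List.forall_mem_cons.mp hl).2)

theorem lang_plus (h : M.s ≠ M.f) :
    M.plus.lang = {w | ∃ l : List (List A), l ≠ [] ∧ (∀ x ∈ l, x ∈ M.lang) ∧ w = l.flatten} := by
  ext w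
  constructor
  · intro hw
    obtain ⟨x, l, rfl, hx, hl⟩ := exists_flatten_of_acceptsFrom_plus hw
    exact ⟨x :: l, List.cons_ne_nil _ _, List.forall_mem_cons.mpr ⟨hx, hl⟩, rfl⟩
  · rintro ⟨_ | ⟨y, l⟩, hne, hl, rfl⟩
    · exact absurd rfl hne
    obtain ⟨hy, hl⟩ := List.forall_mem_cons.mp hl
    exact (AcceptsFrom.mono Set.subset_union_left hy).append (acceptsFrom_plus_flatten h hl)

end SNFA

theorem buildF_comp (π φ : SPC A) :
    (buildF (.comp π φ)).1 = (buildF π).1.concat ((buildF φ).1.shift (buildF π).2) := rfl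

theorem buildF_plus (π : SPC A) : (buildF (.plus π)).1 = (buildF π).1.plus := rfl

theorem statesIn_buildF (π : SPC A) : (buildF π).1.StatesIn (Set.Iio (buildF π).2) := by
  induction π with
  | atom σ =>
    refine ⟨Nat.zero_lt_two, Nat.one_lt_two, ?_⟩
    rintro _ rfl
    exact ⟨Nat.zero_lt_two, Nat.one_lt_two⟩
  | comp π φ ih₁ ih₂ =>
    exact (ih₁.mono (Set.Iio_subset_Iio (Nat.le_add_right _ _))).concat (ih₂.shift _)
  | plus π ih => exact ih.plus

theorem isProper_buildF (π : SPC A) : (buildF π).1.IsProper := by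
  induction π with
  | atom σ =>
    refine ⟨zero_ne_one, ?_⟩
    rintro _ rfl
    exact one_ne_zero
  | comp π φ ih₁ _ =>
    exact ih₁.concat (statesIn_buildF π) (SNFA.statesIn_shift _) (Set.Iio_disjoint_Ici le_rfl)
  | plus π ih => exact ih.plus

/-- for every ⋄-free simple path condition `π` over the alphabet
`Σ = R ∪ {r̄ : r ∈ R}`, the ε-free NFA `M_π` accepts exactly the word language
of `π`: `L(M_π) = L(π)`. -/
theorem buildF_lang {R : Type} (π : SPC (R ⊕ R)) :
    (buildF π).1.lang = π.lang := by
  induction π with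
  | atom σ => exact SNFA.lang_single zero_ne_one σ
  | comp π φ ih₁ ih₂ =>
    rw [buildF_comp, SNFA.lang_concat_shift (statesIn_buildF π) (isProper_buildF φ), ih₁, ih₂]
    rfl
  | plus π ih =>
    rw [buildF_plus, SNFA.lang_plus (isProper_buildF π).1, ih]
    rfl
end

section
/- Under the RPPM separation-of-duty policy, for any finite sequence of requests processed starting from the state with no allow-audit edges, and for any user u and constrained action a_j: the request (u, o, a_j) is allowed at the resulting state if and only if no request (u, o, a_i) with i ≠ j (1 ≤ i ≤ n) was allowed at any earlier point of the sequence. Equivalently, the state A reached after processing any sequence of requests satisfies: (u, i) ∈ A iff request (u, o, a_i) was allowed at some point, and at most one index i per user u has (u, i) ∈ A. -/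
/-!
The state only ever grows, and it grows by exactly the allowed requests, so it is the set of
requests allowed so far. An allowed request `(u, a_j)` finds no edge `(u, i)` with `i ≠ j`, so
adding `(u, j)` keeps every user at no more than one edge; this invariant holds in the empty state.
-/

namespace SoD

variable {U : Type} {n : ℕ}

/-- The system state is a set `A ⊆ U × {1,…,n}` of allow-audit edges:
`(u, i) ∈ A` records that user `u` has been authorized to perform the
constrained action `a_i` on the object `o`. -/
abbrev State (U : Type) (n : ℕ) := Set (U × Fin n)

/-- Under the separation-of-duty policy (rules
`ρ' = {(r, none, p)} ∪ {(allow-audit(a_i), none, p_i)}` and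
`ϱ' = {(p, o, ⋆, 1)} ∪ {(p_i, o, a_j, 0) : j ≠ i}` with `DenyOverride`),
the request `(u, a_j)` is allowed in state `A` iff no `p_i` with `i ≠ j`
is matched, i.e. iff there is no `i ≠ j` with `(u, i) ∈ A`. -/
def allowed (A : State U n) (q : U × Fin n) : Prop :=
  ¬ ∃ i : Fin n, i ≠ q.2 ∧ (q.1, i) ∈ A

/-- Processing one request: if it is allowed, the corresponding allow-audit
edge is added; otherwise the state is unchanged. -/
def step (A : State U n) (q : U × Fin n) : State U n :=
  A ∪ {p | allowed A q ∧ p = q}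

/-- Processing a finite sequence of requests from state `A`. -/
def process (A : State U n) : List (U × Fin n) → State U n
  | [] => A
  | q :: qs => process (step A q) qs

/-- `allowedAtSome A qs q`: while processing the sequence `qs` from state `A`,
the request `q` was (made and) allowed at some point. -/
def allowedAtSome (A : State U n) : List (U × Fin n) → (U × Fin n) → Prop
  | [], _ => False
  | q' :: qs, q => (q' = q ∧ allowed A q) ∨ allowedAtSome (step A q') qs q

def SingleActionPerUser (A : State U n) : Prop :=
  ∀ (u : U) (i i' : Fin n), (u, i) ∈ A → (u, i') ∈ A → i = i'

theorem mem_step {A : State U n} {q p : U × Fin n} :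
    p ∈ step A q ↔ p ∈ A ∨ (allowed A q ∧ p = q) :=
  Iff.rfl

theorem mem_process {A : State U n} {qs : List (U × Fin n)} {p : U × Fin n} :
    p ∈ process A qs ↔ p ∈ A ∨ allowedAtSome A qs p := by
  induction qs generalizing A with
  | nil => simp [process, allowedAtSome]
  | cons q qs ih =>
    rw [process, allowedAtSome, ih, mem_step, eq_comm (a := q)]
    constructor
    · rintro ((hA | ⟨hq, rfl⟩) | hqs)
      exacts [Or.inl hA, Or.inr (Or.inl ⟨rfl, hq⟩), Or.inr (Or.inr hqs)]
    · rintro (hA | ⟨rfl, hq⟩ | hqs)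
      exacts [Or.inl (Or.inl hA), Or.inl (Or.inr ⟨hq, rfl⟩), Or.inr hqs]

theorem eq_of_allowed_of_mem {A : State U n} {u : U} {i j : Fin n}
    (h : allowed A (u, j)) (hi : (u, i) ∈ A) : i = j :=
  by_contra fun hne => h ⟨i, hne, hi⟩

theorem singleActionPerUser_empty : SingleActionPerUser (∅ : State U n) :=
  fun _ _ _ h => h.elim

theorem SingleActionPerUser.step {A : State U n} (hA : SingleActionPerUser A)
    (q : U × Fin n) : SingleActionPerUser (step A q) := by
  rintro u i i' (hi | ⟨hq, rfl⟩) (hi' | ⟨hq', hq'_eq⟩)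
  · exact hA u i i' hi hi'
  · subst hq'_eq
    exact eq_of_allowed_of_mem hq' hi
  · exact (eq_of_allowed_of_mem hq hi').symm
  · exact (Prod.mk.inj hq'_eq).2.symm

theorem SingleActionPerUser.process {A : State U n} (hA : SingleActionPerUser A)
    (qs : List (U × Fin n)) : SingleActionPerUser (process A qs) := by
  induction qs generalizing A with
  | nil => exact hA
  | cons q qs ih => exact ih (hA.step q)

end SoD

theorem separation_of_duty_general (U : Type) (n : ℕ)
    (qs : List (U × Fin n)) :
    (∀ (u : U) (j : Fin n),
        SoD.allowed (SoD.process (∅ : SoD.State U n) qs) (u, j) ↔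
          ¬ ∃ i : Fin n, i ≠ j ∧ SoD.allowedAtSome (∅ : SoD.State U n) qs (u, i)) ∧
    (∀ (u : U) (i : Fin n),
        (u, i) ∈ SoD.process (∅ : SoD.State U n) qs ↔
          SoD.allowedAtSome (∅ : SoD.State U n) qs (u, i)) ∧
    (∀ (u : U) (i i' : Fin n),
        (u, i) ∈ SoD.process (∅ : SoD.State U n) qs →
        (u, i') ∈ SoD.process (∅ : SoD.State U n) qs → i = i') := by
  have hmem : ∀ (u : U) (i : Fin n),
      (u, i) ∈ SoD.process (∅ : SoD.State U n) qs ↔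
        SoD.allowedAtSome (∅ : SoD.State U n) qs (u, i) := fun _ _ => by
    simp [SoD.mem_process]
  exact ⟨fun u j => not_congr <| exists_congr fun i => and_congr_right' (hmem u i), hmem,
    SoD.singleActionPerUser_empty.process qs⟩

/-- starting from the state with no allow-audit edges, after
processing any finite sequence of requests:
* the request `(u, o, a_j)` is allowed at the resulting state iff no request
  `(u, o, a_i)` with `i ≠ j` was allowed at any earlier point;
* `(u, i)` is an allow-audit edge of the resulting state iff the request
  `(u, o, a_i)` was allowed at some point; and
* for each user `u`, at most one index `i` has `(u, i)` in the resulting state. -/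
theorem separation_of_duty (U : Type) (n : ℕ) (hn : 1 ≤ n)
    (qs : List (U × Fin n)) :
    (∀ (u : U) (j : Fin n),
        SoD.allowed (SoD.process (∅ : SoD.State U n) qs) (u, j) ↔
          ¬ ∃ i : Fin n, i ≠ j ∧ SoD.allowedAtSome (∅ : SoD.State U n) qs (u, i)) ∧
    (∀ (u : U) (i : Fin n),
        (u, i) ∈ SoD.process (∅ : SoD.State U n) qs ↔
          SoD.allowedAtSome (∅ : SoD.State U n) qs (u, i)) ∧
    (∀ (u : U) (i i' : Fin n),
        (u, i) ∈ SoD.process (∅ : SoD.State U n) qs →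
        (u, i') ∈ SoD.process (∅ : SoD.State U n) qs → i = i') :=
  separation_of_duty_general U n qs
end
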